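/- Fix k ≥ 4. If a sequence (T_j) of tournaments with |V(T_j)| → ∞ satisfies p(Tr_k, T_j) → k!/2^{k(k−1)/2}, then p(Tr_3, T_j) → 3/4 as j → ∞. -/

import Mathlib

/-- A tournament on `n` vertices: an irreflexive relation such that for every
pair of distinct vertices exactly one direction holds. -/
structure Tournament (n : ℕ) where
  rel : Fin n → Fin n → Bool
  irrefl : ∀ v, rel v v = false
  total : ∀ u v, u ≠ v → rel u v = !rel v u

/-- The transitive tournament `Tr_k`. -/
def Tr (k : ℕ) : Tournament k where
  rel i j := decide (i < j)
  irrefl v := by simp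
  total u v h := by
    rcases h.lt_or_gt with h' | h'
    · simp [h', h'.not_gt]
    · simp [h', h'.not_gt]

/-- The cyclic triangle. -/
def C3 : Tournament 3 where
  rel := ![![false, true, false], ![false, false, true], ![true, false, false]]
  irrefl := by decide
  total := by decide

/-- `W₄`: the non-transitive tournament on 4 vertices with a "winner". -/
def W4 : Tournament 4 where
  rel := ![![false, true, true, true], ![false, false, true, false],
           ![false, false, false, true], ![false, true, false, false]]
  irrefl := by decide
  total := by decide

/-- `L₄`: the non-transitive tournament on 4 vertices with a "loser". -/
def L4 : Tournament 4 where
  rel := ![![false, true, false, true], ![false, false, true, true],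
           ![true, false, false, true], ![false, false, false, false]]
  irrefl := by decide
  total := by decide

/-- `R₄`: the tournament on 4 vertices with out-degree sequence (1,1,2,2). -/
def R4 : Tournament 4 where
  rel := ![![false, true, true, false], ![false, false, true, true],
           ![false, false, false, true], ![true, false, false, false]]
  irrefl := by decide
  total := by decide

/-- Two tournaments on the same number of vertices are isomorphic if some
permutation of the vertices carries one arc relation to the other. -/
def Isomorphic {k : ℕ} (S T : Tournament k) : Prop :=
  ∃ e : Equiv.Perm (Fin k), ∀ i j, S.rel i j = T.rel (e i) (e j)

/-- The subtournament of `T` induced on the subset `A` is isomorphic to `S`. -/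
def IsoOn {k n : ℕ} (S : Tournament k) (T : Tournament n) (A : Finset (Fin n)) : Prop :=
  ∃ f : Fin k → Fin n, Function.Injective f ∧ Finset.univ.image f = A ∧
    ∀ i j, S.rel i j = T.rel (f i) (f j)

open scoped Classical in
/-- The number of `k`-element subsets of the vertex set of `T` whose induced
subtournament is isomorphic to `S` (where `S` has `k` vertices). -/
noncomputable def copyCount {k n : ℕ} (S : Tournament k) (T : Tournament n) : ℕ :=
  ((Finset.powersetCard k (Finset.univ : Finset (Fin n))).filter (IsoOn S T)).card

/-- The (unlabelled) density `p(S, T)`. -/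
noncomputable def density {k n : ℕ} (S : Tournament k) (T : Tournament n) : ℝ :=
  (copyCount S T : ℝ) / (n.choose k : ℝ)

/-- The number of automorphisms of a tournament. -/
def autCount {k : ℕ} (S : Tournament k) : ℕ :=
  (Finset.univ.filter
    (fun e : Equiv.Perm (Fin k) => ∀ i j, S.rel i j = S.rel (e i) (e j))).card

/-- A sequence of tournaments with growing vertex sets is quasi-random if every
fixed tournament `S` on `k` vertices appears with density tending to
`k! / (|Aut S| * 2^(k(k-1)/2))`. -/
def QuasiRandom {nn : ℕ → ℕ} (T : ∀ j, Tournament (nn j)) : Prop :=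
  ∀ (k : ℕ) (S : Tournament k),
    Filter.Tendsto (fun j => density S (T j)) Filter.atTop
      (nhds ((k.factorial : ℝ) / ((autCount S : ℝ) * 2 ^ (k * (k - 1) / 2))))

/-- `D(u,v) = #{w : u→w ∧ w→v}`. -/
def Dcount {n : ℕ} (T : Tournament n) (u v : Fin n) : ℕ :=
  (Finset.univ.filter (fun w => T.rel u w ∧ T.rel w v)).card

/-- `C(u,v) = #{w : v→w ∧ w→u}`. -/
def Ccount {n : ℕ} (T : Tournament n) (u v : Fin n) : ℕ :=
  (Finset.univ.filter (fun w => T.rel v w ∧ T.rel w u)).card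

/-- `I(u,v) = #{w : w→u ∧ w→v}`. -/
def Icount {n : ℕ} (T : Tournament n) (u v : Fin n) : ℕ :=
  (Finset.univ.filter (fun w => T.rel w u ∧ T.rel w v)).card

/-- `O(u,v) = #{w : u→w ∧ v→w}`. -/
def Ocount {n : ℕ} (T : Tournament n) (u v : Fin n) : ℕ :=
  (Finset.univ.filter (fun w => T.rel u w ∧ T.rel v w)).card

/-- The subset `A` induces a transitive subtournament of `T`. -/
def IsTransOn {n : ℕ} (T : Tournament n) (A : Finset (Fin n)) : Prop :=
  ∀ u ∈ A, ∀ v ∈ A, ∀ w ∈ A, T.rel u v → T.rel v w → T.rel u w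

open scoped Classical in
/-- `tr_m(T)`: the number of `m`-element subsets of the vertex set of `T`
inducing a transitive subtournament. -/
noncomputable def trCount (m : ℕ) {n : ℕ} (T : Tournament n) : ℕ :=
  ((Finset.powersetCard m (Finset.univ : Finset (Fin n))).filter (IsTransOn T)).card

/-- The subtournament of `T` induced on a subset `A` of its vertices. -/
noncomputable def induce {n : ℕ} (T : Tournament n) (A : Finset (Fin n)) :
    Tournament A.card where
  rel i j := T.rel (A.orderIsoOfFin rfl i) (A.orderIsoOfFin rfl j)
  irrefl i := T.irrefl _
  total i j h := T.total _ _ (fun hc => h ((A.orderIsoOfFin rfl).injective (Subtype.ext hc)))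

/-- The out-neighbourhood `N⁺(u)` of a vertex. -/
def outSet {n : ℕ} (T : Tournament n) (u : Fin n) : Finset (Fin n) :=
  Finset.univ.filter (fun w => T.rel u w)

/-- The out-degree of a vertex. -/
def outDeg {n : ℕ} (T : Tournament n) (v : Fin n) : ℕ :=
  (Finset.univ.filter (fun w => T.rel v w)).card

/-- The multiset of out-degrees of a tournament. -/
def outDegs {n : ℕ} (T : Tournament n) : Multiset ℕ :=
  Finset.univ.val.map (outDeg T)

/-- The arc relation of `T` is transitive. -/
def IsTransitiveT {k : ℕ} (S : Tournament k) : Prop :=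
  ∀ u v w, S.rel u v → S.rel v w → S.rel u w

/-!
Counting transitive sets by their source gives `tr_{m+1}(A) = ∑_{v ∈ A} tr_m(A ∩ N⁺(v))`.
Since the out-neighbourhoods have average size `(|A| - 1) / 2`, the power-mean inequality and
induction give `tr_m(A) ≥ (|A| - 3^m)^m / 2^(m choose 2)` in every tournament; for `m = 3` this is
`p(Tr_3, T) ≥ 3/4 - o(1)`. Applying the decomposition twice, `tr_{m+2}(T)` is the sum over the
arcs `u → v` of `tr_m(N⁺(u) ∩ N⁺(v))`, and these common out-neighbourhoods have average size
`tr_3(T) / (n choose 2) ≈ p(Tr_3, T) · n / 3`. Hence `p(Tr_3, T) ≥ y > 3/4` forces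
`p(Tr_k, T) ≳ (4y/3)^(k-2) · k! / 2^(k choose 2)`, which the hypothesis rules out.
-/

open Finset

lemma IsTransOn.subset {n : ℕ} {T : Tournament n} {A B : Finset (Fin n)} (hA : IsTransOn T A)
    (hBA : B ⊆ A) : IsTransOn T B :=
  fun u hu v hv w hw => hA u (hBA hu) v (hBA hv) w (hBA hw)

namespace Tournament

variable {n : ℕ} (T : Tournament n)

lemma rel_asymm {u v : Fin n} (h : T.rel u v) : ¬T.rel v u := by
  have huv : u ≠ v := by rintro rfl; simp [T.irrefl] at h
  simpa [T.total u v huv] using h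

lemma rel_of_not_rel {u v : Fin n} (huv : u ≠ v) (h : ¬T.rel u v) : T.rel v u := by
  simpa [T.total u v huv] using h

lemma isTransOn_of_card_le_two {A : Finset (Fin n)} (hA : A.card ≤ 2) : IsTransOn T A := by
  intro u hu v hv w hw huv hvw
  have hne : u ≠ v ∧ u ≠ w ∧ v ≠ w := by
    refine ⟨?_, ?_, ?_⟩ <;> rintro rfl
    · simp [T.irrefl] at huv
    · exact T.rel_asymm huv hvw
    · simp [T.irrefl] at hvw
  have : 2 < A.card := two_lt_card_iff.2 ⟨u, v, w, hu, hv, hw, hne⟩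
  omega

lemma rel_of_mem_outSet {v w : Fin n} (hw : w ∈ outSet T v) : T.rel v w := by
  simpa [outSet] using hw

lemma notMem_inter_outSet (A : Finset (Fin n)) (v : Fin n) : v ∉ A ∩ outSet T v := by
  simp [outSet, T.irrefl]

lemma isTransOn_insert {v : Fin n} {C : Finset (Fin n)} (hC : IsTransOn T C)
    (hv : C ⊆ outSet T v) : IsTransOn T (insert v C) := by
  intro a ha b hb c hc hab hbc
  simp only [mem_insert] at ha hb hc
  rcases hc with rfl | hc
  · rcases hb with rfl | hb
    · simp [T.irrefl] at hbc
    · exact absurd hbc (T.rel_asymm (T.rel_of_mem_outSet (hv hb)))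
  rcases ha with rfl | ha
  · exact T.rel_of_mem_outSet (hv hc)
  rcases hb with rfl | hb
  · exact absurd hab (T.rel_asymm (T.rel_of_mem_outSet (hv ha)))
  exact hC a ha b hb c hc hab hbc

lemma exists_source {A : Finset (Fin n)} (hne : A.Nonempty) (hA : IsTransOn T A) :
    ∃ v ∈ A, ∀ w ∈ A, w ≠ v → T.rel v w := by
  obtain ⟨v, hv, hmax⟩ := exists_max_image A (fun v => (A ∩ outSet T v).card) hne
  refine ⟨v, hv, fun w hw hwv => by_contra fun h => ?_⟩
  have hwv' : T.rel w v := T.rel_of_not_rel (Ne.symm hwv) h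
  -- `w` would beat `v` and, by transitivity, all of `v`'s out-neighbours
  have hsub : insert v (A ∩ outSet T v) ⊆ A ∩ outSet T w := by
    intro x hx
    simp only [mem_insert, mem_inter, outSet, mem_filter, mem_univ, true_and] at hx ⊢
    rcases hx with rfl | ⟨hxA, hvx⟩
    · exact ⟨hv, hwv'⟩
    · exact ⟨hxA, hA w hw v hv x hxA hwv' hvx⟩
  have := card_le_card hsub
  rw [card_insert_of_notMem (T.notMem_inter_outSet A v)] at this
  have := hmax w hw
  omega

lemma eq_of_sources {A : Finset (Fin n)} {v v' : Fin n} (hv : v ∈ A) (hv' : v' ∈ A)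
    (hsrc : ∀ w ∈ A, w ≠ v → T.rel v w) (hsrc' : ∀ w ∈ A, w ≠ v' → T.rel v' w) :
    v = v' :=
  by_contra fun h => T.rel_asymm (hsrc v' hv' (Ne.symm h)) (hsrc' v hv h)

open scoped Classical in
noncomputable def transCount (m : ℕ) (A : Finset (Fin n)) : ℕ :=
  ((powersetCard m A).filter (IsTransOn T)).card

lemma trCount_eq_transCount (m : ℕ) : trCount m T = T.transCount m univ := rfl

lemma transCount_of_le_two {m : ℕ} (hm : m ≤ 2) (A : Finset (Fin n)) :
    T.transCount m A = A.card.choose m := by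
  classical
  rw [transCount, filter_true_of_mem, card_powersetCard]
  exact fun B hB => T.isTransOn_of_card_le_two ((mem_powersetCard.1 hB).2.le.trans hm)

/-- Splitting a transitive set into its source `v` and the rest, which lies in `N⁺(v)`. -/
lemma transCount_succ (m : ℕ) (A : Finset (Fin n)) :
    T.transCount (m + 1) A = ∑ v ∈ A, T.transCount m (A ∩ outSet T v) := by
  classical
  simp only [transCount, ← card_sigma]
  symm
  have hvC : ∀ {v C}, C ⊆ A ∩ outSet T v → v ∉ C :=
    fun hC hv => T.notMem_inter_outSet _ _ (hC hv)
  have hsource : ∀ {v C}, C ⊆ outSet T v → ∀ w ∈ insert v C, w ≠ v → T.rel v w :=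
    fun hC w hw hwv => T.rel_of_mem_outSet (hC ((mem_insert.1 hw).resolve_left hwv))
  refine card_bij (fun p _ => insert p.1 p.2) ?_ ?_ ?_
  · rintro ⟨v, C⟩ hp
    simp only [mem_sigma, mem_filter, mem_powersetCard] at hp ⊢
    obtain ⟨hv, ⟨hCA, hC⟩, htrans⟩ := hp
    refine ⟨⟨insert_subset hv (hCA.trans inter_subset_left), ?_⟩,
      T.isTransOn_insert htrans (hCA.trans inter_subset_right)⟩
    rw [card_insert_of_notMem (hvC hCA), hC]
  · rintro ⟨v, C⟩ hp ⟨v', C'⟩ hp' h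
    simp only [mem_sigma, mem_filter, mem_powersetCard] at hp hp'
    obtain ⟨-, ⟨hCA, -⟩, -⟩ := hp
    obtain ⟨-, ⟨hCA', -⟩, -⟩ := hp'
    obtain rfl : v = v' := T.eq_of_sources (mem_insert_self v C) (h ▸ mem_insert_self v' C')
      (hsource (hCA.trans inter_subset_right)) (h ▸ hsource (hCA'.trans inter_subset_right))
    simp only [Sigma.mk.injEq, heq_eq_eq, true_and]
    rw [← erase_insert (hvC hCA), h, erase_insert (hvC hCA')]
  · intro B hB
    simp only [mem_filter, mem_powersetCard] at hB
    obtain ⟨⟨hBA, hB⟩, htrans⟩ := hB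
    obtain ⟨v, hv, hsrc⟩ := T.exists_source (card_pos.1 (by omega)) htrans
    refine ⟨⟨v, B.erase v⟩, ?_, insert_erase hv⟩
    simp only [mem_sigma, mem_filter, mem_powersetCard]
    refine ⟨hBA hv, ⟨fun w hw => ?_, by rw [card_erase_of_mem hv, hB, Nat.add_sub_cancel]⟩,
      htrans.subset (erase_subset v B)⟩
    obtain ⟨hwv, hwB⟩ := mem_erase.1 hw
    simpa [outSet] using And.intro (hBA hwB) (hsrc w hwB hwv)

lemma sum_card_inter_outSet (A : Finset (Fin n)) :
    ∑ v ∈ A, (A ∩ outSet T v).card = A.card.choose 2 := by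
  have h := T.transCount_succ 1 A
  simp only [T.transCount_of_le_two (le_refl 2), T.transCount_of_le_two one_le_two,
    Nat.choose_one_right] at h
  exact h.symm

def arcs : Finset (Σ _ : Fin n, Fin n) :=
  univ.sigma (outSet T)

lemma card_arcs : T.arcs.card = n.choose 2 := by
  simpa [arcs] using T.sum_card_inter_outSet univ

/-- A transitive `(m + 2)`-set is an arc `u → v` from its source to its second vertex,
together with a transitive `m`-set in the common out-neighbourhood of `u` and `v`. -/
lemma trCount_add_two (m : ℕ) :
    trCount (m + 2) T = ∑ p ∈ T.arcs, T.transCount m (outSet T p.1 ∩ outSet T p.2) := by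
  rw [trCount_eq_transCount, T.transCount_succ, arcs, sum_sigma]
  refine sum_congr rfl fun u _ => ?_
  rw [univ_inter, T.transCount_succ]

lemma sum_arcs_card_inter_outSet :
    ∑ p ∈ T.arcs, (outSet T p.1 ∩ outSet T p.2).card = trCount 3 T := by
  simp [T.trCount_add_two 1, T.transCount_of_le_two one_le_two]

lemma isTransOn_of_isoOn_Tr {m : ℕ} {A : Finset (Fin n)} (h : IsoOn (Tr m) T A) :
    IsTransOn T A := by
  obtain ⟨f, -, rfl, hrel⟩ := h
  rintro _ hu _ hv _ hw hij hjl
  obtain ⟨i, -, rfl⟩ := mem_image.1 hu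
  obtain ⟨j, -, rfl⟩ := mem_image.1 hv
  obtain ⟨l, -, rfl⟩ := mem_image.1 hw
  simp only [← hrel, Tr, decide_eq_true_eq] at hij hjl ⊢
  exact hij.trans hjl

/-- Listing the source first and then the rest of the set recursively. -/
lemma isoOn_Tr_of_isTransOn :
    ∀ {m : ℕ} {A : Finset (Fin n)}, A.card = m → IsTransOn T A → IsoOn (Tr m) T A
  | 0, A, hA, _ => ⟨Fin.elim0, fun i => i.elim0, by simp_all, fun i => i.elim0⟩
  | m + 1, A, hA, htrans => by
    obtain ⟨v, hv, hsrc⟩ := T.exists_source (card_pos.1 (by omega)) htrans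
    obtain ⟨g, hg, himg, hrel⟩ := isoOn_Tr_of_isTransOn
      (by rw [card_erase_of_mem hv, hA]) (htrans.subset (erase_subset v A))
    have hgA : ∀ i, g i ≠ v ∧ g i ∈ A :=
      fun i => mem_erase.1 (himg ▸ mem_image_of_mem g (mem_univ i))
    refine ⟨Fin.cons v g, ?_, ?_, ?_⟩
    · exact Fin.cons_injective_iff.2 ⟨fun ⟨i, hi⟩ => (hgA i).1 hi, hg⟩
    · rw [← insert_erase hv, ← himg]
      ext x
      simp [Fin.exists_fin_succ, eq_comm]
    · intro i j
      cases i using Fin.cases <;> cases j using Fin.cases <;>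
        simp [Tr, T.irrefl, Fin.succ_pos, hsrc _ (hgA _).2 (hgA _).1, T.rel_asymm, ← hrel]

lemma copyCount_Tr (m : ℕ) : copyCount (Tr m) T = trCount m T := by
  classical
  refine congrArg card (filter_congr fun A hA => ⟨T.isTransOn_of_isoOn_Tr, ?_⟩)
  exact T.isoOn_Tr_of_isTransOn (mem_powersetCard.1 hA).2

end Tournament

lemma card_mul_max_sub_pow_le_sum {ι : Type*} (s : Finset ι) (x : ι → ℝ) {t : ℝ}
    (ht : s.card * t ≤ ∑ i ∈ s, x i) (c : ℝ) (m : ℕ) :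
    s.card * max (t - c) 0 ^ m ≤ ∑ i ∈ s, max (x i - c) 0 ^ m := by
  cases m with
  | zero => simp
  | succ m =>
    rcases s.eq_empty_or_nonempty with rfl | hs
    · simp
    have hcard : (0 : ℝ) < s.card := by exact_mod_cast hs.card_pos
    have hsum : s.card * max (t - c) 0 ≤ ∑ i ∈ s, max (x i - c) 0 := by
      rw [mul_max_of_nonneg _ _ hcard.le, mul_zero]
      refine max_le ?_ (sum_nonneg fun i _ => le_max_right _ _)
      have hshift : s.card * (t - c) ≤ ∑ i ∈ s, (x i - c) := by
        rw [sum_sub_distrib, sum_const, nsmul_eq_mul]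
        linarith
      exact hshift.trans (sum_le_sum fun i _ => le_max_left _ _)
    refine le_trans ?_ (pow_sum_div_card_le_sum_pow (fun i _ => le_max_right _ _) _)
    rw [le_div_iff₀ (by positivity)]
    calc s.card * max (t - c) 0 ^ (m + 1) * s.card ^ m = (s.card * max (t - c) 0) ^ (m + 1) := by
          ring
      _ ≤ _ := pow_le_pow_left₀ (by positivity) hsum _

namespace Tournament

variable {n : ℕ} (T : Tournament n)

/-- Induction over the out-neighbourhoods `A ∩ N⁺(v)`, whose average size is `(|A| - 1) / 2`. -/
theorem pow_le_transCount (m : ℕ) (A : Finset (Fin n)) :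
    max ((A.card : ℝ) - 3 ^ m) 0 ^ m ≤ 2 ^ m.choose 2 * T.transCount m A := by
  induction m generalizing A with
  | zero => simp [T.transCount_of_le_two zero_le_two]
  | succ m ih =>
    have hmean :
        (A.card : ℝ) * (((A.card : ℝ) - 1) / 2) ≤ ∑ v ∈ A, ((A ∩ outSet T v).card : ℝ) := by
      rw [← Nat.cast_sum, T.sum_card_inter_outSet, Nat.cast_choose_two]
      exact le_of_eq (by ring)
    have hjensen := card_mul_max_sub_pow_le_sum A _ hmean (3 ^ m) m
    have hstep :
        max ((A.card : ℝ) - 3 ^ (m + 1)) 0 ≤ 2 * max (((A.card : ℝ) - 1) / 2 - 3 ^ m) 0 := by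
      rw [mul_max_of_nonneg _ _ (zero_le_two (α := ℝ)), mul_zero]
      refine max_le_max ?_ le_rfl
      have : (1 : ℝ) ≤ 3 ^ m := one_le_pow₀ (by norm_num)
      rw [pow_succ]
      linarith
    have hcard : max ((A.card : ℝ) - 3 ^ (m + 1)) 0 ≤ A.card :=
      max_le (by linarith [pow_pos (three_pos (α := ℝ)) (m + 1)]) (Nat.cast_nonneg _)
    calc max ((A.card : ℝ) - 3 ^ (m + 1)) 0 ^ (m + 1)
        = max ((A.card : ℝ) - 3 ^ (m + 1)) 0 ^ m * max ((A.card : ℝ) - 3 ^ (m + 1)) 0 :=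
          pow_succ _ _
      _ ≤ (2 * max (((A.card : ℝ) - 1) / 2 - 3 ^ m) 0) ^ m * A.card :=
          mul_le_mul (pow_le_pow_left₀ (le_max_right _ _) hstep m) hcard (le_max_right _ _)
            (by positivity)
      _ = 2 ^ m * (A.card * max (((A.card : ℝ) - 1) / 2 - 3 ^ m) 0 ^ m) := by ring
      _ ≤ 2 ^ m * ∑ v ∈ A, 2 ^ m.choose 2 * (T.transCount m (A ∩ outSet T v) : ℝ) :=
          mul_le_mul_of_nonneg_left (hjensen.trans (sum_le_sum fun v _ => ih _)) (by positivity)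
      _ = 2 ^ (m + 1).choose 2 * T.transCount (m + 1) A := by
          rw [T.transCount_succ, Nat.choose_succ_succ', Nat.choose_one_right, Nat.cast_sum,
            ← mul_sum, pow_add]
          ring

/-- The common out-neighbourhoods `N⁺(u) ∩ N⁺(v)` of the arcs `u → v` have average size
`tr₃(T) / (n choose 2)`, and each contains many transitive `m`-sets. -/
theorem choose_two_mul_pow_le_trCount (m : ℕ) :
    (n.choose 2 : ℝ) * max ((trCount 3 T : ℝ) / n.choose 2 - 3 ^ m) 0 ^ m ≤
      2 ^ m.choose 2 * (trCount (m + 2) T : ℝ) := by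
  rcases Nat.eq_zero_or_pos (n.choose 2) with h0 | hpos
  · simp [h0]
  have hmean : (T.arcs.card : ℝ) * (trCount 3 T / n.choose 2) ≤
      ∑ p ∈ T.arcs, ((outSet T p.1 ∩ outSet T p.2).card : ℝ) := by
    rw [T.card_arcs, mul_div_cancel₀ _ (by positivity), ← Nat.cast_sum,
      T.sum_arcs_card_inter_outSet]
  have hjensen := card_mul_max_sub_pow_le_sum T.arcs _ hmean (3 ^ m) m
  rw [T.card_arcs] at hjensen
  refine hjensen.trans ?_
  rw [T.trCount_add_two, Nat.cast_sum, mul_sum]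
  exact sum_le_sum fun p _ => T.pow_le_transCount m _

end Tournament

open Filter Topology Asymptotics Nat

lemma tendsto_choose_div_pow (k : ℕ) :
    Tendsto (fun n : ℕ => (n.choose k : ℝ) / n ^ k) atTop (𝓝 (1 / k !)) := by
  refine ((isEquivalent_choose k).div IsEquivalent.refl).tendsto_nhds_iff.2 ?_
  refine tendsto_const_nhds.congr' ?_
  filter_upwards [eventually_ge_atTop 1] with n hn
  have : (n : ℝ) ^ k ≠ 0 := pow_ne_zero _ (by positivity)
  simp only [Pi.div_apply]
  field_simp

lemma tendsto_div_choose {g : ℕ → ℝ} {L : ℝ} (k : ℕ)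
    (hg : Tendsto (fun n => g n / n ^ k) atTop (𝓝 L)) :
    Tendsto (fun n => g n / n.choose k) atTop (𝓝 (k ! * L)) := by
  refine (IsEquivalent.refl.div (isEquivalent_choose k)).tendsto_nhds_iff.2 ?_
  refine (hg.const_mul (k ! : ℝ)).congr fun n => ?_
  simp only [Pi.div_apply]
  rw [div_div_eq_mul_div]
  ring

lemma tendsto_max_sub_div (a b : ℝ) :
    Tendsto (fun n : ℕ => max (a * n - b) 0 / n) atTop (𝓝 (max a 0)) := by
  have h : Tendsto (fun n : ℕ => max (a - b / n) 0) atTop (𝓝 (max (a - 0) 0)) :=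
    (tendsto_const_nhds.sub (tendsto_const_div_atTop_nhds_zero_nat b)).max tendsto_const_nhds
  rw [sub_zero] at h
  refine h.congr' ?_
  filter_upwards [eventually_ge_atTop 1] with n hn
  have hn : (0 : ℝ) < n := by positivity
  rw [← max_div_div_right hn.le, zero_div, sub_div, mul_div_cancel_right₀ _ hn.ne']

lemma max_sub_pow_div_le_density_Tr_three {n : ℕ} (T : Tournament n) :
    max ((n : ℝ) - 27) 0 ^ 3 / 8 / n.choose 3 ≤ density (Tr 3) T := by
  rw [density, T.copyCount_Tr]
  gcongr
  have := T.pow_le_transCount 3 univ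
  norm_num at this
  rw [div_le_iff₀ (by norm_num), mul_comm]
  exact this

lemma tendsto_max_sub_pow_div_choose_three :
    Tendsto (fun n : ℕ => max ((n : ℝ) - 27) 0 ^ 3 / 8 / n.choose 3) atTop (𝓝 (3 / 4)) := by
  have h :
      Tendsto (fun n : ℕ => max ((n : ℝ) - 27) 0 ^ 3 / 8 / n ^ 3) atTop (𝓝 (1 / 8)) := by
    have := ((tendsto_max_sub_div 1 27).pow 3).div_const 8
    norm_num at this
    refine this.congr fun n => ?_
    rw [div_pow]
    ring
  convert tendsto_div_choose 3 h using 2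
  norm_num [Nat.factorial]

/-- The lower bound on `p(Tr_{m+2}, T)` that `choose_two_mul_pow_le_trCount` gives for a
tournament `T` on `n` vertices with `p(Tr_3, T) = t`. -/
noncomputable def forcingBound (m n : ℕ) (t : ℝ) : ℝ :=
  n.choose 2 * max (t * (n - 2) / 3 - 3 ^ m) 0 ^ m / 2 ^ m.choose 2 / n.choose (m + 2)

lemma forcingBound_mono {m n : ℕ} (hn : 2 ≤ n) : Monotone (forcingBound m n) := by
  intro s t hst
  have hn' : (2 : ℝ) ≤ n := by exact_mod_cast hn
  unfold forcingBound
  gcongr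

lemma forcingBound_le_density {n : ℕ} (T : Tournament n) (m : ℕ) (hn : 3 ≤ n) :
    forcingBound m n (density (Tr 3) T) ≤ density (Tr (m + 2)) T := by
  have hchoose : (n.choose 3 : ℝ) * 3 = n.choose 2 * (n - 2) := by
    rw [← Nat.cast_ofNat (R := ℝ) (n := 2), ← Nat.cast_sub (show 2 ≤ n by omega)]
    exact_mod_cast Nat.choose_succ_right_eq n 2
  have hn2 : (n : ℝ) - 2 ≠ 0 := by
    have : (3 : ℝ) ≤ n := by exact_mod_cast hn
    linarith
  have h3 : (n.choose 3 : ℝ) ≠ 0 := by exact_mod_cast (Nat.choose_pos hn).ne'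
  have h2 : (n.choose 2 : ℝ) ≠ 0 := by exact_mod_cast (Nat.choose_pos (by omega)).ne'
  have ht : density (Tr 3) T * (n - 2) / 3 = trCount 3 T / n.choose 2 := by
    rw [density, T.copyCount_Tr]
    field_simp
    linear_combination (-trCount 3 T : ℝ) * hchoose
  rw [forcingBound, ht, density, T.copyCount_Tr]
  gcongr
  rw [div_le_iff₀' (by positivity)]
  exact T.choose_two_mul_pow_le_trCount m

lemma tendsto_forcingBound (m : ℕ) {t : ℝ} (ht : 0 ≤ t) :
    Tendsto (fun n => forcingBound m n t) atTop
      (𝓝 ((m + 2)! / 2 ^ (m + 2).choose 2 * (4 * t / 3) ^ m)) := by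
  have h : Tendsto (fun n : ℕ => (n.choose 2 : ℝ) / n ^ 2 *
      (max (t / 3 * n - (2 * t / 3 + 3 ^ m)) 0 / n) ^ m / 2 ^ m.choose 2) atTop
      (𝓝 (1 / 2 ! * max (t / 3) 0 ^ m / 2 ^ m.choose 2)) :=
    ((tendsto_choose_div_pow 2).mul ((tendsto_max_sub_div _ _).pow m)).div_const _
  have hg : Tendsto (fun n : ℕ => n.choose 2 * max (t * (n - 2) / 3 - 3 ^ m) 0 ^ m /
      2 ^ m.choose 2 / (n : ℝ) ^ (m + 2)) atTop
      (𝓝 (1 / 2 ! * max (t / 3) 0 ^ m / 2 ^ m.choose 2)) := by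
    refine h.congr fun n => ?_
    rw [show t * (n - 2) / 3 - 3 ^ m = t / 3 * n - (2 * t / 3 + 3 ^ m) by ring]
    ring
  have hc : (m + 2).choose 2 = m.choose 2 + 2 * m + 1 := by
    simp [Nat.choose_succ_succ']
    ring
  have hlim : ((m + 2)! : ℝ) / 2 ^ (m + 2).choose 2 * (4 * t / 3) ^ m =
      (m + 2)! * (1 / 2 ! * max (t / 3) 0 ^ m / 2 ^ m.choose 2) := by
    rw [max_eq_left (by positivity), hc, pow_add, pow_add, pow_mul, mul_div_assoc, mul_pow,
      div_pow]
    norm_num [Nat.factorial]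
    field_simp
  rw [hlim]
  exact tendsto_div_choose (m + 2) hg

/-- for fixed `k ≥ 4`, if `p(Tr_k, T_j) → k!/2^(k(k-1)/2)`, then
`p(Tr_3, T_j) → 3/4`. -/
theorem tr3_density_of_minimizer (k : ℕ) (hk : 4 ≤ k)
    (nn : ℕ → ℕ) (T : ∀ j, Tournament (nn j))
    (hn : Filter.Tendsto nn Filter.atTop Filter.atTop)
    (h : Filter.Tendsto (fun j => density (Tr k) (T j)) Filter.atTop
      (nhds ((k.factorial : ℝ) / 2 ^ (k * (k - 1) / 2)))) :
    Filter.Tendsto (fun j => density (Tr 3) (T j)) Filter.atTop (nhds (3 / 4)) := by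
  refine tendsto_order.2 ⟨fun a ha => ?_, fun y hy => ?_⟩
  · filter_upwards [(tendsto_max_sub_pow_div_choose_three.comp hn).eventually (lt_mem_nhds ha)]
      with j hj
    exact hj.trans_le (max_sub_pow_div_le_density_Tr_three (T j))
  obtain ⟨m, rfl⟩ : ∃ m, k = m + 2 := ⟨k - 2, by omega⟩
  rw [← Nat.choose_two_right] at h
  -- a triangle density above `3/4` would force `p(Tr_k)` up by a factor `(4y/3)^(k-2) > 1`
  have hgap : ((m + 2)! : ℝ) / 2 ^ (m + 2).choose 2 <
      (m + 2)! / 2 ^ (m + 2).choose 2 * (4 * y / 3) ^ m :=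
    lt_mul_of_one_lt_right (by positivity) (one_lt_pow₀ (by linarith) (by omega))
  filter_upwards [(((tendsto_forcingBound m (by linarith)).comp hn).sub h).eventually
      (lt_mem_nhds (sub_pos.2 hgap)), hn.eventually (eventually_ge_atTop (m + 2))] with j hpos hj
  by_contra! hy
  have := (forcingBound_mono (by omega) hy).trans (forcingBound_le_density (T j) m (by omega))
  simp only [Function.comp_apply, sub_pos] at hpos
  linarith
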